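/- For every real a > 0, ∫₁^∞ K₀( a (x²+1)/x ) dx = (π/(4a)) e^{−2a} + (1/(2a)) ∫_{2a}^∞ K₀(y) dy. -/

import Mathlib

/-!
Substituting `x = eᵘ` turns the left side into `∫₀^∞ eᵘ K₀(2a cosh u) du`; split
`eᵘ = cosh u + sinh u`. The `sinh` part is `(1/2a) ∫_{2a}^∞ K₀` by `y = 2a cosh u`. In the `cosh` part, expand `K₀` and swap
the integrals; the substitutions `w = cosh t sinh u` and `r = sinh t` give
`∫∫_{r,w>0} e^{-2a√(1+r²+w²)} / (1+r²)`, a quarter of the same integral over the plane. In polar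
coordinates the angular integral is `2π / √(1+ρ²)`, and the remaining radial integral is elementary.
-/

open MeasureTheory Real

/-- Modified Bessel function of the second kind, integral representation. -/
noncomputable def besselK (ν z : ℝ) : ℝ :=
  ∫ t in Set.Ioi (0:ℝ), Real.exp (-z * Real.cosh t) * Real.cosh (ν * t)

open Set Filter Topology

lemma besselK_zero_apply (z : ℝ) :
    besselK 0 z = ∫ t in Ioi (0 : ℝ), exp (-(z * cosh t)) := by
  simp [besselK]

lemma besselK_zero_nonneg (z : ℝ) : 0 ≤ besselK 0 z := by
  rw [besselK_zero_apply]
  exact setIntegral_nonneg measurableSet_Ioi fun t _ => (exp_pos _).le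

lemma measurable_besselK (ν : ℝ) : Measurable (besselK ν) :=
  (StronglyMeasurable.integral_prod_right' (ν := volume.restrict (Ioi 0))
    (f := fun p : ℝ × ℝ => exp (-p.1 * cosh p.2) * cosh (ν * p.2))
    (by fun_prop : Continuous _).stronglyMeasurable).measurable

lemma exp_neg_mul_cosh_mul_exp_le {c t : ℝ} (hc : 0 < c) (ht : 0 ≤ t) :
    exp (-(c * cosh t)) * exp t ≤ exp (4 / c) * exp (-t) := by
  rw [← exp_add, ← exp_add, exp_le_exp]
  have hcosh : t ^ 2 / 4 ≤ cosh t := by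
    nlinarith [quadratic_le_exp_of_nonneg ht, exp_pos (-t), cosh_eq t]
  have hamgm : 2 * t ≤ c * (t ^ 2 / 4) + 4 / c := by
    have : c * (t ^ 2 / 4) + 4 / c - 2 * t = c / 4 * (t - 4 / c) ^ 2 := by field_simp; ring
    nlinarith [sq_nonneg (t - 4 / c), this, hc]
  nlinarith [mul_le_mul_of_nonneg_left hcosh hc.le]

lemma abs_cosh_le_exp {t : ℝ} (ht : 0 ≤ t) : |cosh t| ≤ exp t := by
  rw [abs_of_pos (cosh_pos t), ← cosh_add_sinh]
  linarith [sinh_nonneg_iff.2 ht]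

lemma abs_sinh_le_exp {t : ℝ} (ht : 0 ≤ t) : |sinh t| ≤ exp t := by
  rw [abs_of_nonneg (sinh_nonneg_iff.2 ht), ← cosh_add_sinh]
  linarith [cosh_pos t]

lemma integrableOn_exp_neg_mul_cosh_mul {c : ℝ} (hc : 0 < c) {φ : ℝ → ℝ} (hφ : Continuous φ)
    (hφ_le : ∀ t ∈ Ioi (0 : ℝ), |φ t| ≤ exp t) :
    IntegrableOn (fun t => exp (-(c * cosh t)) * φ t) (Ioi 0) := by
  refine ((exp_neg_integrableOn_Ioi 0 one_pos).const_mul (exp (4 / c))).mono' (by fun_prop) ?_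
  filter_upwards [ae_restrict_mem measurableSet_Ioi] with t ht
  calc ‖exp (-(c * cosh t)) * φ t‖ ≤ exp (-(c * cosh t)) * exp t := by
        rw [norm_mul, norm_of_nonneg (exp_pos _).le]
        exact mul_le_mul_of_nonneg_left (hφ_le t ht) (exp_pos _).le
    _ ≤ exp (4 / c) * exp (-t) := exp_neg_mul_cosh_mul_exp_le hc (le_of_lt ht)
    _ = exp (4 / c) * exp (-1 * t) := by rw [neg_one_mul]

lemma integrableOn_exp_neg_mul_cosh {c : ℝ} (hc : 0 < c) :
    IntegrableOn (fun t => exp (-(c * cosh t))) (Ioi 0) := by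
  simpa using integrableOn_exp_neg_mul_cosh_mul hc (φ := fun _ => 1) continuous_const
    fun t ht => by simpa using le_of_lt ht

lemma add_le_two_mul_mul {x y : ℝ} (hx : 1 ≤ x) (hy : 1 ≤ y) : x + y ≤ 2 * x * y := by
  nlinarith [mul_nonneg (sub_nonneg.2 hx) (sub_nonneg.2 hy)]

lemma besselK_zero_two_mul_mul_le {a s : ℝ} (ha : 0 < a) (hs : 1 ≤ s) :
    besselK 0 (2 * a * s) ≤ exp (-(a * s)) * besselK 0 a := by
  rw [besselK_zero_apply, besselK_zero_apply, ← integral_const_mul]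
  refine setIntegral_mono_on (integrableOn_exp_neg_mul_cosh (by positivity))
    ((integrableOn_exp_neg_mul_cosh ha).const_mul _) measurableSet_Ioi fun t _ => ?_
  rw [← exp_add, exp_le_exp]
  linarith [mul_le_mul_of_nonneg_left (add_le_two_mul_mul hs (one_le_cosh t)) ha.le]

lemma integrableOn_mul_besselK_zero_two_mul_cosh {a : ℝ} (ha : 0 < a) {φ : ℝ → ℝ}
    (hφ : Continuous φ) (hφ_le : ∀ t ∈ Ioi (0 : ℝ), |φ t| ≤ exp t) :
    IntegrableOn (fun u => φ u * besselK 0 (2 * a * cosh u)) (Ioi 0) := by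
  refine ((integrableOn_exp_neg_mul_cosh_mul ha hφ.abs fun t ht => by
    simpa using hφ_le t ht).const_mul (besselK 0 a)).mono'
    (hφ.aestronglyMeasurable.mul ((measurable_besselK 0).comp (by fun_prop)).aestronglyMeasurable)
    (Eventually.of_forall fun u => ?_)
  rw [norm_mul, norm_eq_abs, norm_of_nonneg (besselK_zero_nonneg _)]
  calc |φ u| * besselK 0 (2 * a * cosh u) ≤ |φ u| * (exp (-(a * cosh u)) * besselK 0 a) :=
        mul_le_mul_of_nonneg_left (besselK_zero_two_mul_mul_le ha (one_le_cosh u)) (abs_nonneg _)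
    _ = besselK 0 a * (exp (-(a * cosh u)) * |φ u|) := by ring

lemma integral_Ioi_one_eq_integral_exp_mul (f : ℝ → ℝ) :
    ∫ x in Ioi 1, f x = ∫ u in Ioi 0, exp u * f (exp u) := by
  rw [← exp_zero, ← image_exp_Ioi, integral_image_eq_integral_abs_deriv_smul measurableSet_Ioi
    (fun x _ => (hasDerivAt_exp x).hasDerivWithinAt) exp_injective.injOn]
  simp_rw [abs_of_pos (exp_pos _), smul_eq_mul]

lemma integral_Ioi_mul_sinh_comp_mul_cosh {c : ℝ} (hc : 0 < c) (g : ℝ → ℝ) :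
    ∫ u in Ioi 0, c * sinh u * g (c * cosh u) = ∫ y in Ioi c, g y := by
  have hcosh : cosh '' Ioi 0 = Ioi 1 := by
    ext y
    refine ⟨?_, fun hy => ⟨arcosh y, arcosh_pos hy, cosh_arcosh (le_of_lt hy)⟩⟩
    rintro ⟨u, hu, rfl⟩
    exact one_lt_cosh.2 (ne_of_gt hu)
  have himage : (fun u => c * cosh u) '' Ioi 0 = Ioi c := by
    rw [← image_image (c * ·), hcosh, image_mul_left_Ioi hc, mul_one]
  rw [← himage, integral_image_eq_integral_abs_deriv_smul measurableSet_Ioi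
    (fun u _ => ((hasDerivAt_cosh u).const_mul c).hasDerivWithinAt)
    fun u hu v hv h => cosh_injOn (Ioi_subset_Ici_self hu) (Ioi_subset_Ici_self hv)
      (mul_left_cancel₀ hc.ne' h)]
  refine setIntegral_congr_fun measurableSet_Ioi fun u hu => ?_
  rw [smul_eq_mul, abs_of_pos (mul_pos hc (sinh_pos_iff.2 hu))]

lemma integral_Ioi_mul_cosh_comp_mul_sinh {c : ℝ} (hc : 0 < c) (g : ℝ → ℝ) :
    ∫ u in Ioi 0, c * cosh u * g (c * sinh u) = ∫ w in Ioi 0, g w := by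
  have himage : (fun u => c * sinh u) '' Ioi 0 = Ioi 0 := by
    rw [← image_image (c * ·), ← sinhOrderIso_apply, OrderIso.image_Ioi]
    simp [image_mul_left_Ioi hc]
  have key := integral_image_eq_integral_abs_deriv_smul (measurableSet_Ioi (a := 0))
    (fun u _ => ((hasDerivAt_sinh u).const_mul c).hasDerivWithinAt)
    (fun u _ v _ h => sinh_injective (mul_left_cancel₀ hc.ne' h)) g
  rw [himage] at key
  rw [key]
  refine setIntegral_congr_fun measurableSet_Ioi fun u _ => ?_
  rw [smul_eq_mul, abs_of_pos (mul_pos hc (cosh_pos u))]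

lemma integral_eq_four_mul_integral_Ioi_Ioi {f : ℝ → ℝ → ℝ}
    (hf : Integrable (fun p : ℝ × ℝ => f p.1 p.2))
    (hf₁ : ∀ r w, f |r| w = f r w) (hf₂ : ∀ r w, f r |w| = f r w) :
    ∫ p : ℝ × ℝ, f p.1 p.2 = 4 * ∫ r in Ioi 0, ∫ w in Ioi 0, f r w := by
  rw [Measure.volume_eq_prod] at hf ⊢
  have hinner (r : ℝ) : ∫ w, f r w = 2 * ∫ w in Ioi 0, f r w := by
    simp_rw [← integral_comp_abs (f := f r), hf₂]
  have houter : ∫ r, ∫ w in Ioi 0, f r w = 2 * ∫ r in Ioi 0, ∫ w in Ioi 0, f r w := by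
    simp_rw [← integral_comp_abs (f := fun r => ∫ w in Ioi 0, f r w), hf₁]
  rw [integral_prod _ hf]
  simp_rw [hinner, integral_const_mul, houter]
  ring

lemma integrableOn_comp_polarCoord_symm {f : ℝ × ℝ → ℝ} (hf : Integrable f) :
    IntegrableOn (fun p => p.1 • f (polarCoord.symm p)) polarCoord.target := by
  have := (integrableOn_image_iff_integrableOn_abs_det_fderiv_smul volume
    polarCoord.open_target.measurableSet
    (fun p _ => (hasFDerivAt_polarCoord_symm p).hasFDerivWithinAt) polarCoord.symm.injOn f).1
    (by rw [polarCoord.symm_image_target_eq_source]; exact hf.integrableOn)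
  simp_rw [det_fderivPolarCoordSymm] at this
  refine this.congr_fun (fun p hp => ?_) polarCoord.open_target.measurableSet
  simp only [abs_of_pos (show 0 < p.1 from hp.1)]

lemma integral_univ_inv_sq_add_sq {c : ℝ} (hc : 0 < c) : ∫ u, (c ^ 2 + u ^ 2)⁻¹ = π / c := by
  have h := Measure.integral_comp_div (fun u => (1 + u ^ 2)⁻¹) c
  rw [integral_univ_inv_one_add_sq, abs_of_pos hc, smul_eq_mul] at h
  have hpt : ∀ u, (1 + (u / c) ^ 2)⁻¹ = c ^ 2 * (c ^ 2 + u ^ 2)⁻¹ := fun u => by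
    field_simp
  simp_rw [hpt, integral_const_mul] at h
  rw [eq_div_iff hc.ne']
  exact mul_left_cancel₀ hc.ne' (by linear_combination h)

lemma integral_Ioo_inv_one_add_sq_mul_cos_sq (b : ℝ) :
    ∫ θ in Ioo (-π) π, (1 + b ^ 2 * cos θ ^ 2)⁻¹ = 2 * π / √(1 + b ^ 2) := by
  set f : ℝ → ℝ := fun θ => (1 + b ^ 2 * cos θ ^ 2)⁻¹ with hf
  have hper : Function.Periodic f π := fun θ => by simp [hf, cos_add_pi]
  have hcont : Continuous f := by
    exact Continuous.inv₀ (by fun_prop) fun θ => by positivity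
  have hc : 0 < √(1 + b ^ 2) := sqrt_pos.2 (by positivity)
  -- on `(-π/2, π/2)` substitute `θ = arctan u`, using `cos² (arctan u) = 1 / (1 + u²)`
  have hhalf : ∫ θ in -(π / 2)..(-(π / 2) + π), f θ = π / √(1 + b ^ 2) := by
    rw [intervalIntegral.integral_of_le (by linarith [pi_pos]), integral_Ioc_eq_integral_Ioo,
      show -(π / 2) + π = π / 2 by ring, ← range_arctan, ← image_univ,
      integral_image_eq_integral_abs_deriv_smul MeasurableSet.univ
        (fun u _ => (hasDerivAt_arctan u).hasDerivWithinAt) arctan_injective.injOn,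
      setIntegral_univ, ← integral_univ_inv_sq_add_sq hc]
    congr 1 with u
    have h1 : 0 < 1 + u ^ 2 := by positivity
    rw [smul_eq_mul, hf]
    dsimp only
    rw [cos_arctan, div_pow, sq_sqrt h1.le, sq_sqrt (by positivity),
      abs_of_pos (by positivity)]
    field_simp
    ring
  rw [← integral_Ioc_eq_integral_Ioo, ← intervalIntegral.integral_of_le (by linarith [pi_pos]),
    ← intervalIntegral.integral_add_adjacent_intervals (b := 0) (hcont.intervalIntegrable _ _)
      (hcont.intervalIntegrable _ _)]
  have h1 := hper.intervalIntegral_add_eq (-π) (-(π / 2))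
  have h2 := hper.intervalIntegral_add_eq 0 (-(π / 2))
  rw [neg_add_cancel] at h1
  rw [zero_add] at h2
  rw [h1, h2, hhalf]
  ring

noncomputable def besselKernel (a r w : ℝ) : ℝ :=
  exp (-(2 * a * √(1 + r ^ 2 + w ^ 2))) / (1 + r ^ 2)

lemma integrable_besselKernel {a : ℝ} (ha : 0 < a) :
    Integrable (fun p : ℝ × ℝ => besselKernel a p.1 p.2) := by
  have hprod := (integrable_inv_one_add_sq.mul_prod integrable_inv_one_add_sq).const_mul
    (2 * a ^ 2)⁻¹
  rw [← Measure.volume_eq_prod] at hprod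
  refine hprod.mono' (Continuous.aestronglyMeasurable
    (.div (by fun_prop) (by fun_prop) fun p => by positivity))
    (Eventually.of_forall fun p => ?_)
  set s := √(1 + p.1 ^ 2 + p.2 ^ 2)
  have hs : s ^ 2 = 1 + p.1 ^ 2 + p.2 ^ 2 := sq_sqrt (by positivity)
  -- `exp x ≥ x² / 2` makes `exp (-2 a s) ≤ 1 / (2 a² s²)`
  have hexp : exp (-(2 * a * s)) ≤ (2 * a ^ 2)⁻¹ * (1 + p.2 ^ 2)⁻¹ := by
    have hx : 0 ≤ 2 * a * s := by positivity
    have h := quadratic_le_exp_of_nonneg hx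
    rw [exp_neg, ← mul_inv]
    refine inv_anti₀ (by positivity) (le_trans ?_ h)
    nlinarith [sq_nonneg p.1, sq_nonneg a, mul_nonneg (sq_nonneg a) (sq_nonneg p.1)]
  rw [norm_of_nonneg (by unfold besselKernel; positivity), besselKernel, div_eq_mul_inv]
  calc exp (-(2 * a * s)) * (1 + p.1 ^ 2)⁻¹
      ≤ (2 * a ^ 2)⁻¹ * (1 + p.2 ^ 2)⁻¹ * (1 + p.1 ^ 2)⁻¹ :=
        mul_le_mul_of_nonneg_right hexp (by positivity)
    _ = (2 * a ^ 2)⁻¹ * ((1 + p.1 ^ 2)⁻¹ * (1 + p.2 ^ 2)⁻¹) := by ring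

lemma integral_besselKernel_eq_integral_polar {a : ℝ} (ha : 0 < a) :
    ∫ p : ℝ × ℝ, besselKernel a p.1 p.2
      = ∫ ρ in Ioi 0, ρ * exp (-(2 * a * √(1 + ρ ^ 2))) * (2 * π / √(1 + ρ ^ 2)) := by
  have hpolar (p : ℝ × ℝ) : p.1 • besselKernel a (polarCoord.symm p).1 (polarCoord.symm p).2
      = p.1 * exp (-(2 * a * √(1 + p.1 ^ 2))) * (1 + p.1 ^ 2 * cos p.2 ^ 2)⁻¹ := by
    have h := sin_sq_add_cos_sq p.2
    rw [polarCoord_symm_apply, smul_eq_mul, besselKernel,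
      show 1 + (p.1 * cos p.2) ^ 2 + (p.1 * sin p.2) ^ 2 = 1 + p.1 ^ 2 by
        linear_combination p.1 ^ 2 * h]
    ring
  have hint := integrableOn_comp_polarCoord_symm (integrable_besselKernel ha)
  simp_rw [hpolar, polarCoord_target, Measure.volume_eq_prod] at hint
  rw [← integral_comp_polarCoord_symm]
  simp_rw [hpolar, polarCoord_target, Measure.volume_eq_prod]
  rw [setIntegral_prod _ hint]
  refine setIntegral_congr_fun measurableSet_Ioi fun ρ _ => ?_
  dsimp only
  rw [integral_const_mul, integral_Ioo_inv_one_add_sq_mul_cos_sq]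

lemma integral_Ioi_mul_exp_neg_sqrt {a : ℝ} (ha : 0 < a) :
    ∫ ρ in Ioi 0, ρ * exp (-(2 * a * √(1 + ρ ^ 2))) * (2 * π / √(1 + ρ ^ 2))
      = π / a * exp (-(2 * a)) := by
  set G : ℝ → ℝ := fun ρ => -(π / a) * exp (-(2 * a * √(1 + ρ ^ 2)))
  have hG (ρ : ℝ) :
      HasDerivAt G (ρ * exp (-(2 * a * √(1 + ρ ^ 2))) * (2 * π / √(1 + ρ ^ 2))) ρ := by
    have h1 : 0 < 1 + ρ ^ 2 := by positivity
    have hsqrt := ((hasDerivAt_pow 2 ρ).const_add 1).sqrt h1.ne'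
    refine (((hsqrt.const_mul (2 * a)).neg.exp).const_mul (-(π / a))).congr_deriv ?_
    simp only [Pi.neg_apply]
    field_simp
    ring
  have hlim : Tendsto G atTop (𝓝 0) := by
    have hsqrt : Tendsto (fun ρ : ℝ => √(1 + ρ ^ 2)) atTop atTop :=
      tendsto_atTop_mono (fun ρ => (le_abs_self ρ).trans (abs_le_sqrt (by linarith)))
        tendsto_id
    simpa [G] using ((tendsto_exp_atBot.comp
      (tendsto_neg_atTop_atBot.comp (hsqrt.const_mul_atTop (by positivity)))).const_mul (-(π / a)))
  rw [integral_Ioi_of_hasDerivAt_of_nonneg (hG 0).continuousAt.continuousWithinAt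
    (fun ρ _ => hG ρ) (fun ρ hρ => by have : (0 : ℝ) < ρ := hρ; positivity) hlim]
  simp [G]

lemma integrable_cosh_mul_exp_neg_two_mul_cosh_mul_cosh {a : ℝ} (ha : 0 < a) :
    Integrable (Function.uncurry fun u t => cosh u * exp (-(2 * a * cosh u * cosh t)))
      ((volume.restrict (Ioi 0)).prod (volume.restrict (Ioi 0))) := by
  refine ((integrableOn_exp_neg_mul_cosh_mul ha continuous_cosh
    fun t ht => abs_cosh_le_exp (le_of_lt ht)).mul_prod
    (integrableOn_exp_neg_mul_cosh ha)).mono' (by fun_prop) (Eventually.of_forall fun p => ?_)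
  rw [Function.uncurry_apply_pair, norm_of_nonneg (by positivity)]
  calc cosh p.1 * exp (-(2 * a * cosh p.1 * cosh p.2))
      ≤ cosh p.1 * (exp (-(a * cosh p.1)) * exp (-(a * cosh p.2))) := by
        refine mul_le_mul_of_nonneg_left ?_ (cosh_pos _).le
        rw [← exp_add, exp_le_exp]
        linarith [mul_le_mul_of_nonneg_left
          (add_le_two_mul_mul (one_le_cosh p.1) (one_le_cosh p.2)) ha.le]
    _ = exp (-(a * cosh p.1)) * cosh p.1 * exp (-(a * cosh p.2)) := by ring

lemma integral_cosh_mul_besselK_zero_two_mul_cosh {a : ℝ} (ha : 0 < a) :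
    ∫ u in Ioi 0, cosh u * besselK 0 (2 * a * cosh u) = π / (4 * a) * exp (-2 * a) := by
  -- the substitution `w = cosh t * sinh u` turns `2 a cosh u cosh t` into `2 a √(1 + sinh² t + w²)`
  have hsubst (t u : ℝ) : cosh t * cosh u * (cosh t * besselKernel a (sinh t) (cosh t * sinh u))
      = cosh u * exp (-(2 * a * cosh u * cosh t)) := by
    have h : 1 + sinh t ^ 2 + (cosh t * sinh u) ^ 2 = (cosh u * cosh t) ^ 2 := by
      rw [mul_pow, mul_pow, cosh_sq t, cosh_sq u]; ring
    have := cosh_pos t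
    rw [besselKernel, h, sqrt_sq (by positivity), ← cosh_sq']
    field_simp
  calc ∫ u in Ioi 0, cosh u * besselK 0 (2 * a * cosh u)
      = ∫ u in Ioi 0, ∫ t in Ioi 0, cosh u * exp (-(2 * a * cosh u * cosh t)) := by
        simp_rw [besselK_zero_apply, ← integral_const_mul]
    _ = ∫ t in Ioi 0, ∫ u in Ioi 0, cosh u * exp (-(2 * a * cosh u * cosh t)) :=
        integral_integral_swap (integrable_cosh_mul_exp_neg_two_mul_cosh_mul_cosh ha)
    _ = ∫ t in Ioi 0, cosh t * ∫ w in Ioi 0, besselKernel a (sinh t) w := by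
        refine setIntegral_congr_fun measurableSet_Ioi fun t _ => ?_
        rw [← integral_const_mul, ← integral_Ioi_mul_cosh_comp_mul_sinh (cosh_pos t)
          fun w => cosh t * besselKernel a (sinh t) w]
        simp_rw [hsubst]
    _ = ∫ r in Ioi 0, ∫ w in Ioi 0, besselKernel a r w := by
        simpa using integral_Ioi_mul_cosh_comp_mul_sinh one_pos
          fun r => ∫ w in Ioi 0, besselKernel a r w
    _ = (∫ p : ℝ × ℝ, besselKernel a p.1 p.2) / 4 := by
        rw [integral_eq_four_mul_integral_Ioi_Ioi (integrable_besselKernel ha)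
          (fun r w => by simp [besselKernel]) (fun r w => by simp [besselKernel])]
        ring
    _ = π / (4 * a) * exp (-2 * a) := by
        rw [integral_besselKernel_eq_integral_polar ha, integral_Ioi_mul_exp_neg_sqrt ha, neg_mul]
        ring

lemma integral_sinh_mul_besselK_zero_two_mul_cosh {a : ℝ} (ha : 0 < a) :
    ∫ u in Ioi 0, sinh u * besselK 0 (2 * a * cosh u)
      = 1 / (2 * a) * ∫ y in Ioi (2 * a), besselK 0 y := by
  rw [← integral_Ioi_mul_sinh_comp_mul_cosh (c := 2 * a) (by positivity) (besselK 0),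
    ← integral_const_mul]
  refine setIntegral_congr_fun measurableSet_Ioi fun u _ => ?_
  field_simp

theorem integral_besselK_zero (a : ℝ) (ha : 0 < a) :
    ∫ x in Set.Ioi (1:ℝ), besselK 0 (a * (x ^ 2 + 1) / x)
      = (π / (4 * a)) * Real.exp (-2 * a)
        + (1 / (2 * a)) * ∫ y in Set.Ioi (2 * a), besselK 0 y := by
  have hsplit (u : ℝ) : exp u * besselK 0 (a * (exp u ^ 2 + 1) / exp u)
      = cosh u * besselK 0 (2 * a * cosh u) + sinh u * besselK 0 (2 * a * cosh u) := by
    rw [← add_mul, cosh_add_sinh, cosh_eq, exp_neg]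
    field_simp
  rw [integral_Ioi_one_eq_integral_exp_mul]
  simp_rw [hsplit]
  rw [integral_add, integral_cosh_mul_besselK_zero_two_mul_cosh ha,
    integral_sinh_mul_besselK_zero_two_mul_cosh ha]
  · exact integrableOn_mul_besselK_zero_two_mul_cosh ha continuous_cosh
      fun t ht => abs_cosh_le_exp (le_of_lt ht)
  · exact integrableOn_mul_besselK_zero_two_mul_cosh ha continuous_sinh
      fun t ht => abs_sinh_le_exp (le_of_lt ht)
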